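/- For a continuous function V : [0,1] → [0,∞) with V(1) = 0, the quantity 2∫₀¹ √(V(s)) ds equals the infimum over T > 0 of the minimum of ∫₀ᵀ (V(w(t)) + |w'(t)|²) dt over all Lipschitz functions w : [0,T] → [0,1] with w(0) = 0 and w(T) = 1. -/

import Mathlib

/-!
Young's inequality `V(w) + w'² ≥ 2 √V(w) w'` and the change of variables `s = w(t)`, valid for
Lipschitz `w`, bound every profile energy below by `2 ∫₀¹ √V`. Conversely, the equipartition
profile `w' = √(V(w) + ε)`, obtained by inverting `x ↦ ∫₀ˣ (V + ε)^(-1/2)`, has energy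
`∫₀¹ (2V + ε) / √(V + ε) ≤ 2 ∫₀¹ √V + 2 √ε`.
-/

open MeasureTheory Filter Topology Metric Set intervalIntegral
noncomputable section

/-- The admissible optimal-profile energies: values ∫₀ᵀ (V(w) + |w'|²) dt over T > 0 and
Lipschitz w : [0,T] → [0,1] with w(0) = 0, w(T) = 1. -/
def profileEnergies (V : ℝ → ℝ) : Set ℝ :=
  {c : ℝ | ∃ T : ℝ, 0 < T ∧ ∃ w : ℝ → ℝ, (∃ L : NNReal, LipschitzOnWith L w (Icc 0 T)) ∧
    (∀ t ∈ Icc (0:ℝ) T, w t ∈ Icc (0:ℝ) 1) ∧ w 0 = 0 ∧ w T = 1 ∧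
    c = ∫ t in (0:ℝ)..T, (V (w t) + (deriv w t) ^ 2)}

open Function

theorem LipschitzOnWith.intervalIntegrable_deriv_sq {f : ℝ → ℝ} {K : NNReal} {a b : ℝ}
    (hab : a ≤ b) (hf : LipschitzOnWith K f (Icc a b)) :
    IntervalIntegrable (fun t => deriv f t ^ 2) volume a b := by
  rw [intervalIntegrable_iff_integrableOn_Ioo_of_le hab]
  refine Measure.integrableOn_of_bounded (M := (K : ℝ) ^ 2) measure_Ioo_lt_top.ne
    ((measurable_deriv f).pow_const 2).aestronglyMeasurable
    (ae_restrict_of_forall_mem measurableSet_Ioo fun t ht => ?_)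
  rw [norm_pow]
  exact pow_le_pow_left₀ (norm_nonneg _)
    (norm_deriv_le_of_lipschitzOn (Icc_mem_nhds ht.1 ht.2) hf) 2

theorem integral_comp_mul_deriv_of_lipschitzOn {g w : ℝ → ℝ} {K : NNReal} {a b : ℝ}
    (hg : Continuous g) (hw : LipschitzOnWith K w (uIcc a b)) :
    ∫ t in a..b, g (w t) * deriv w t = ∫ s in w a..w b, g s := by
  set G : ℝ → ℝ := fun x => ∫ s in w a..x, g s
  have hG : ∀ x, HasDerivAt G (g x) x := fun x => (hg.integral_hasStrictDerivAt _ x).hasDerivAt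
  have hG_C1 : ContDiff ℝ 1 G := contDiff_one_iff_deriv.2
    ⟨fun x => (hG x).differentiableAt, (funext fun x => (hG x).deriv) ▸ hg⟩
  -- `G` is only locally Lipschitz, but `w` takes values in a compact set
  obtain ⟨KG, hKG⟩ :=
    hG_C1.locallyLipschitz.locallyLipschitzOn.exists_lipschitzOnWith_of_compact
      (isCompact_uIcc.image_of_continuousOn hw.continuousOn)
  have hGw : AbsolutelyContinuousOnInterval (G ∘ w) a b :=
    (hKG.comp hw (mapsTo_image w _)).absolutelyContinuousOnInterval
  calc ∫ t in a..b, g (w t) * deriv w t = ∫ t in a..b, deriv (G ∘ w) t := by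
        refine intervalIntegral.integral_congr_ae ?_
        filter_upwards [hw.absolutelyContinuousOnInterval.ae_differentiableAt] with t ht htab
        exact ((hG (w t)).comp t (ht (uIoc_subset_uIcc htab)).hasDerivAt).deriv.symm
    _ = ∫ s in w a..w b, g s := by simp [hGw.integral_deriv_eq_sub, G]

theorem surjective_of_le_deriv {τ : ℝ → ℝ} {c : ℝ} (hc : 0 < c)
    (hτ : Differentiable ℝ τ) (hle : ∀ x, c ≤ deriv τ x) : Surjective τ := by
  have hgrowth := mul_sub_le_image_sub_of_le_deriv hτ hle
  refine hτ.continuous.surjective ?_ ?_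
  · refine tendsto_atTop_mono' _ ?_
      (tendsto_atTop_add_const_right _ (τ 0) (tendsto_id.const_mul_atTop hc))
    filter_upwards [eventually_ge_atTop 0] with x hx
    show c * x + τ 0 ≤ τ x
    linarith [hgrowth hx]
  · refine tendsto_atBot_mono' _ ?_
      (tendsto_atBot_add_const_right _ (τ 0) (tendsto_id.const_mul_atBot hc))
    filter_upwards [eventually_le_atBot 0] with x hx
    show τ x ≤ c * x + τ 0
    linarith [hgrowth hx]

theorem exists_monotone_surjective_hasDerivAt_comp {f : ℝ → ℝ} {C : NNReal}
    (hf : Continuous f) (hpos : ∀ s, 0 < f s) (hle : ∀ s, f s ≤ C) :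
    ∃ w : ℝ → ℝ, w 0 = 0 ∧ Monotone w ∧ Surjective w ∧ LipschitzWith C w ∧
      ∀ t, HasDerivAt w (f (w t)) t := by
  -- separation of variables: the solution is the inverse of `x ↦ ∫₀ˣ 1 / f`
  set τ : ℝ → ℝ := fun x => ∫ s in 0..x, (f s)⁻¹
  have hτ : ∀ x, HasDerivAt τ (f x)⁻¹ x := fun x =>
    ((hf.inv₀ fun s => (hpos s).ne').integral_hasStrictDerivAt 0 x).hasDerivAt
  have hτ_diff : Differentiable ℝ τ := fun x => (hτ x).differentiableAt
  have hτ_mono : StrictMono τ :=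
    strictMono_of_deriv_pos fun x => (hτ x).deriv ▸ inv_pos.2 (hpos x)
  have hτ_surj : Surjective τ :=
    surjective_of_le_deriv (inv_pos.2 ((hpos 0).trans_le (hle 0)))
      hτ_diff fun x => (hτ x).deriv ▸ inv_anti₀ (hpos x) (hle x)
  set e := hτ_mono.orderIsoOfSurjective τ hτ_surj
  have hw : ∀ t, HasDerivAt e.symm (f (e.symm t)) t := fun t => by
    simpa using (hτ (e.symm t)).of_local_left_inverse e.symm.continuous.continuousAt
      (inv_ne_zero (hpos _).ne') (Eventually.of_forall e.apply_symm_apply)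
  refine ⟨e.symm, ?_, e.symm.monotone, e.symm.surjective, ?_, hw⟩
  · rw [OrderIso.symm_apply_eq]
    exact (intervalIntegral.integral_same).symm
  · refine lipschitzWith_of_nnnorm_deriv_le (fun t => (hw t).differentiableAt) fun t => ?_
    rw [← NNReal.coe_le_coe, coe_nnnorm, (hw t).deriv, Real.norm_of_nonneg (hpos _).le]
    exact hle _

theorem ContinuousOn.exists_continuous_extension_Icc {V : ℝ → ℝ} {a b : ℝ} (hab : a ≤ b)
    (hV : ContinuousOn V (Icc a b)) :
    ∃ V' : ℝ → ℝ, Continuous V' ∧ EqOn V' V (Icc a b) ∧ range V' = V '' Icc a b :=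
  ⟨IccExtend hab ((Icc a b).domRestrict V), continuous_IccExtend_iff.2 hV.domRestrict,
    fun _ hs => IccExtend_of_mem hab _ hs, by rw [IccExtend_range, range_domRestrict]⟩

theorem sqrt_add_le_sqrt_add_sqrt {x y : ℝ} (hx : 0 ≤ x) (hy : 0 ≤ y) :
    √(x + y) ≤ √x + √y := by
  rw [Real.sqrt_le_left (by positivity), add_sq, Real.sq_sqrt hx, Real.sq_sqrt hy]
  nlinarith [Real.sqrt_nonneg x, Real.sqrt_nonneg y]

theorem two_mul_integral_sqrt_le_of_mem_profileEnergies {V : ℝ → ℝ}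
    (hV : ContinuousOn V (Icc 0 1)) (hV_nonneg : ∀ s ∈ Icc (0:ℝ) 1, 0 ≤ V s) {c : ℝ}
    (hc : c ∈ profileEnergies V) : 2 * ∫ s in (0:ℝ)..1, √(V s) ≤ c := by
  obtain ⟨T, hT, w, ⟨L, hw⟩, hw_mem, hw0, hwT, rfl⟩ := hc
  obtain ⟨V', hV', hV'V, -⟩ := hV.exists_continuous_extension_Icc zero_le_one
  have hw' : LipschitzOnWith L w (uIcc 0 T) := by rwa [uIcc_of_le hT.le]
  have hint_cross : IntervalIntegrable (fun t => 2 * (√(V' (w t)) * deriv w t)) volume 0 T :=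
    (hw'.absolutelyContinuousOnInterval.intervalIntegrable_deriv.continuousOn_mul
      (hV'.sqrt.comp_continuousOn hw'.continuousOn)).const_mul 2
  have hint_energy : IntervalIntegrable (fun t => V (w t) + deriv w t ^ 2) volume 0 T :=
    ((hV.comp hw.continuousOn fun t ht => hw_mem t ht).intervalIntegrable_of_Icc hT.le).add
      (hw.intervalIntegrable_deriv_sq hT.le)
  calc 2 * ∫ s in (0:ℝ)..1, √(V s) = 2 * ∫ s in (0:ℝ)..1, √(V' s) := by
        congr 1
        exact integral_congr fun s hs => by rw [hV'V (uIcc_of_le (zero_le_one' ℝ) ▸ hs)]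
    _ = ∫ t in (0:ℝ)..T, 2 * (√(V' (w t)) * deriv w t) := by
        rw [intervalIntegral.integral_const_mul,
          integral_comp_mul_deriv_of_lipschitzOn hV'.sqrt hw', hw0, hwT]
    _ ≤ ∫ t in (0:ℝ)..T, (V (w t) + deriv w t ^ 2) := by
        refine integral_mono_on hT.le hint_cross hint_energy fun t ht => ?_
        rw [hV'V (hw_mem t ht), ← mul_assoc]
        simpa only [Real.sq_sqrt (hV_nonneg _ (hw_mem t ht))] using
          two_mul_le_add_sq √(V (w t)) (deriv w t)

theorem exists_mem_profileEnergies_le {V : ℝ → ℝ}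
    (hV : ContinuousOn V (Icc 0 1)) (hV_nonneg : ∀ s ∈ Icc (0:ℝ) 1, 0 ≤ V s) {ε : ℝ}
    (hε : 0 < ε) :
    ∃ c ∈ profileEnergies V, c ≤ 2 * (∫ s in (0:ℝ)..1, √(V s)) + 2 * √ε := by
  obtain ⟨V', hV', hV'V, hV'_range⟩ := hV.exists_continuous_extension_Icc zero_le_one
  have hV'_nonneg : ∀ s, 0 ≤ V' s := fun s => by
    obtain ⟨x, hx, hxs⟩ := hV'_range.subset (mem_range_self s)
    exact hxs ▸ hV_nonneg x hx
  obtain ⟨M, hM⟩ := hV'_range ▸ (isCompact_Icc.image_of_continuousOn hV).bddAbove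
  -- `ε > 0` keeps `w' = √(V'(w) + ε)` away from rest points, so `w` reaches `1` in finite time
  set f : ℝ → ℝ := fun s => √(V' s + ε)
  have hf_pos : ∀ s, 0 < f s := fun s => Real.sqrt_pos.2 (by linarith [hV'_nonneg s])
  have hf_le : ∀ s, f s ≤ (√(M + ε)).toNNReal := fun s => by
    rw [Real.coe_toNNReal _ (Real.sqrt_nonneg _)]
    exact Real.sqrt_le_sqrt (by linarith [hM (mem_range_self s)])
  obtain ⟨w, hw0, hw_mono, hw_surj, hw_lip, hw⟩ :=
    exists_monotone_surjective_hasDerivAt_comp (f := f) (hV'.add continuous_const).sqrt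
      hf_pos hf_le
  obtain ⟨T, hwT⟩ := hw_surj 1
  have hT : 0 < T := lt_of_not_ge fun h => by linarith [hw_mono h]
  have hw_mem : ∀ t ∈ Icc 0 T, w t ∈ Icc (0:ℝ) 1 := fun t ht =>
    ⟨hw0 ▸ hw_mono ht.1, hwT ▸ hw_mono ht.2⟩
  refine ⟨_, ⟨T, hT, w, ⟨_, hw_lip.lipschitzOnWith⟩, hw_mem, hw0, hwT, rfl⟩, ?_⟩
  set H : ℝ → ℝ := fun s => (2 * V' s + ε) / f s
  have hH : Continuous H :=
    ((hV'.const_mul 2).add continuous_const).div (hV'.add continuous_const).sqrt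
      fun s => (hf_pos s).ne'
  calc ∫ t in (0:ℝ)..T, (V (w t) + deriv w t ^ 2)
        = ∫ t in (0:ℝ)..T, H (w t) * deriv w t := by
        refine integral_congr fun t ht => ?_
        rw [uIcc_of_le hT.le] at ht
        simp only [H, (hw t).deriv, ← hV'V (hw_mem t ht)]
        rw [div_mul_cancel₀ _ (hf_pos _).ne', Real.sq_sqrt (by linarith [hV'_nonneg (w t)])]
        ring
    _ = ∫ s in (0:ℝ)..1, H s := by
        rw [integral_comp_mul_deriv_of_lipschitzOn hH hw_lip.lipschitzOnWith, hw0, hwT]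
    _ ≤ ∫ s in (0:ℝ)..1, (2 * √(V' s) + 2 * √ε) := by
        refine integral_mono_on zero_le_one (hH.intervalIntegrable _ _)
          (((hV'.sqrt.const_mul 2).add continuous_const).intervalIntegrable _ _) fun s _ => ?_
        calc H s ≤ 2 * f s := by
              rw [div_le_iff₀ (hf_pos s), mul_assoc, ← sq,
                Real.sq_sqrt (by linarith [hV'_nonneg s])]
              linarith
          _ ≤ 2 * √(V' s) + 2 * √ε := by
              linarith [sqrt_add_le_sqrt_add_sqrt (hV'_nonneg s) hε.le]
    _ = 2 * (∫ s in (0:ℝ)..1, √(V' s)) + 2 * √ε := by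
        rw [intervalIntegral.integral_add ((hV'.sqrt.const_mul 2).intervalIntegrable _ _)
          intervalIntegrable_const, intervalIntegral.integral_const_mul,
          intervalIntegral.integral_const]
        simp
    _ = 2 * (∫ s in (0:ℝ)..1, √(V s)) + 2 * √ε := by
        congr 2
        exact integral_congr fun s hs => by rw [hV'V (uIcc_of_le (zero_le_one' ℝ) ▸ hs)]

theorem stmt_7_general (V : ℝ → ℝ) (hVcont : ContinuousOn V (Icc 0 1))
    (hVnonneg : ∀ s ∈ Icc (0:ℝ) 1, 0 ≤ V s) :
    sInf (profileEnergies V) = 2 * ∫ s in (0:ℝ)..1, Real.sqrt (V s) := by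
  obtain ⟨c, hc, -⟩ := exists_mem_profileEnergies_le hVcont hVnonneg one_pos
  refine IsGLB.csInf_eq ⟨fun c hc => two_mul_integral_sqrt_le_of_mem_profileEnergies hVcont
    hVnonneg hc, fun b hb => le_of_forall_pos_le_add fun η hη => ?_⟩ ⟨c, hc⟩
  obtain ⟨c, hc, hc_le⟩ := exists_mem_profileEnergies_le hVcont hVnonneg (ε := (η / 2) ^ 2)
    (by positivity)
  rw [Real.sqrt_sq (by positivity)] at hc_le
  linarith [hb hc]

/-- For continuous V : [0,1] → [0,∞) with V(1) = 0, the constant 2∫₀¹√V equals the infimum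
over T > 0 of the minimal profile energy ∫₀ᵀ (V(w) + |w'|²) dt among Lipschitz
w : [0,T] → [0,1] with w(0)=0, w(T)=1. -/
theorem stmt_7 (V : ℝ → ℝ) (hVcont : ContinuousOn V (Icc 0 1))
    (hVnonneg : ∀ s ∈ Icc (0:ℝ) 1, 0 ≤ V s) (hV1 : V 1 = 0) :
    sInf (profileEnergies V) = 2 * ∫ s in (0:ℝ)..1, Real.sqrt (V s) :=
  stmt_7_general V hVcont hVnonneg
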